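/- The polynomial X⁸ + 14X⁴ + 1 has 8 distinct roots in ℂ, and its root set is {±α, ±iα, ±1/α, ±i/α} where α is a root of X² - (i+1)X - i; in particular the root set is invariant under x ↦ ix and x ↦ 1/x. -/

import Mathlib

/-!
The octic is a quadratic in `x⁴`, with product of roots `1`: if `a` is one root, then
`x⁸ + 14x⁴ + 1 = (x⁴ - a⁴)(x⁴ - a⁻⁴)`, so the roots are the fourth roots of `a⁴` and of `a⁻⁴`,
namely `±a, ±ia, ±a⁻¹, ±ia⁻¹`. A root of `X² - (i+1)X - i` satisfies `α⁴ = 4(i-1)α - 3`,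
from which `α⁸ + 14α⁴ + 1 = 0` follows. That there are exactly eight roots is separability:
the octic is coprime to its derivative `8X³(X⁴ + 7)`. Invariance under `x ↦ ix` and `x ↦ x⁻¹`
holds because the octic depends only on `x⁴` and is palindromic.
-/

open Complex Polynomial

theorem Function.Surjective.image_eq_of_preimage_eq {α : Type*} {f : α → α}
    (hf : Function.Surjective f) {s : Set α} (h : f ⁻¹' s = s) : f '' s = s := by
  simpa only [h] using Set.image_preimage_eq s hf

theorem Polynomial.ncard_setOf_isRoot_of_separable {K : Type*} [Field K] [IsAlgClosed K]
    {p : K[X]} (hp : p.Separable) : {x | p.IsRoot x}.ncard = p.natDegree := by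
  classical
  have hset : {x | p.IsRoot x} = (p.roots.toFinset : Set K) := by
    ext x
    simp [mem_roots hp.ne_zero]
  rw [hset, Set.ncard_coe_finset, Multiset.toFinset_card_of_nodup (nodup_roots hp),
    IsAlgClosed.card_roots_eq_natDegree]

theorem Complex.pow_four_eq_pow_four_iff {x a : ℂ} :
    x ^ 4 = a ^ 4 ↔ x = a ∨ x = -a ∨ x = I * a ∨ x = -(I * a) := by
  have hsq : -a ^ 2 = (I * a) ^ 2 := by rw [mul_pow, I_sq, neg_one_mul]
  rw [show x ^ 4 = (x ^ 2) ^ 2 by ring, show a ^ 4 = (a ^ 2) ^ 2 by ring,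
    sq_eq_sq_iff_eq_or_eq_neg, hsq, sq_eq_sq_iff_eq_or_eq_neg, sq_eq_sq_iff_eq_or_eq_neg, or_assoc]

noncomputable def octic : ℂ[X] := X ^ 8 + 14 * X ^ 4 + 1

theorem octic_isRoot_iff {x : ℂ} : octic.IsRoot x ↔ x ^ 8 + 14 * x ^ 4 + 1 = 0 := by
  simp [octic]

theorem natDegree_octic : octic.natDegree = 8 := by
  unfold octic
  compute_degree!

theorem derivative_octic : derivative octic = 8 * X ^ 7 + 56 * X ^ 3 := by
  simp only [octic, derivative_add, derivative_mul, derivative_X_pow, derivative_one,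
    derivative_ofNat, Nat.cast_ofNat, map_ofNat]
  ring

theorem separable_octic : octic.Separable := by
  have h : C (384⁻¹ : ℂ) * 384 = 1 := by
    rw [← map_ofNat C 384, ← C_mul, inv_mul_cancel₀ (by norm_num), C_1]
  rw [separable_def', derivative_octic]
  -- Euclid's algorithm on `octic` and `8X³(X⁴ + 7)` gives
  -- `8(7X⁴ + 48) · octic - X(7X⁴ + 97) · (8X⁷ + 56X³) = 384`.
  refine ⟨C 384⁻¹ * (56 * X ^ 4 + 384), -C 384⁻¹ * X * (7 * X ^ 4 + 97), ?_⟩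
  unfold octic
  linear_combination h

theorem octic_eval_I_mul_eq_zero_iff (x : ℂ) :
    (I * x) ^ 8 + 14 * (I * x) ^ 4 + 1 = 0 ↔ x ^ 8 + 14 * x ^ 4 + 1 = 0 := by
  have h : (I * x) ^ 4 = x ^ 4 := by rw [mul_pow, I_pow_four, one_mul]
  rw [show (I * x) ^ 8 = ((I * x) ^ 4) ^ 2 by ring, h, ← pow_mul]

theorem octic_eval_inv_eq_zero_iff (x : ℂ) :
    x⁻¹ ^ 8 + 14 * x⁻¹ ^ 4 + 1 = 0 ↔ x ^ 8 + 14 * x ^ 4 + 1 = 0 := by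
  rcases eq_or_ne x 0 with rfl | hx
  · norm_num
  have h : x⁻¹ ^ 8 + 14 * x⁻¹ ^ 4 + 1 = x⁻¹ ^ 8 * (x ^ 8 + 14 * x ^ 4 + 1) := by
    field_simp
    ring
  rw [h, mul_eq_zero, or_iff_right (pow_ne_zero _ (inv_ne_zero hx))]

theorem octic_eval_eq_mul_of_root {a : ℂ} (ha : a ≠ 0) (hroot : a ^ 8 + 14 * a ^ 4 + 1 = 0)
    (x : ℂ) : x ^ 8 + 14 * x ^ 4 + 1 = (x ^ 4 - a ^ 4) * (x ^ 4 - a⁻¹ ^ 4) := by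
  field_simp
  linear_combination x ^ 4 * hroot

theorem octic_root_of_quadratic {α : ℂ} (hα : α ^ 2 = (I + 1) * α + I) :
    α ^ 8 + 14 * α ^ 4 + 1 = 0 := by
  have h4 : α ^ 4 = (4 * I - 4) * α - 3 := by
    linear_combination (α ^ 2 + (I + 1) * α + 3 * I) * hα + (α ^ 2 + 4 * α + 3) * I_sq
  linear_combination (α ^ 4 + (4 * I - 4) * α + 11) * h4 + 16 * (1 - I) ^ 2 * hα
      + (16 * I - 32 - 16 * (1 - I) * α) * I_sq

theorem ne_zero_of_quadratic {α : ℂ} (hα : α ^ 2 = (I + 1) * α + I) : α ≠ 0 := by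
  rintro rfl
  exact I_ne_zero (by simpa using hα.symm)

theorem setOf_octic_eq_zero {α : ℂ} (hα : α ^ 2 = (I + 1) * α + I) :
    {x : ℂ | x ^ 8 + 14 * x ^ 4 + 1 = 0} =
      {α, -α, I * α, -(I * α), α⁻¹, -α⁻¹, I * α⁻¹, -(I * α⁻¹)} := by
  ext x
  rw [Set.mem_ofPred_eq,
    octic_eval_eq_mul_of_root (ne_zero_of_quadratic hα) (octic_root_of_quadratic hα),
    mul_eq_zero, sub_eq_zero, sub_eq_zero, pow_four_eq_pow_four_iff, pow_four_eq_pow_four_iff]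
  simp only [Set.mem_insert_iff, Set.mem_singleton_iff, or_assoc]

theorem stmt17 :
    let R : Set ℂ := {x | x ^ 8 + 14 * x ^ 4 + 1 = 0}
    R.ncard = 8 ∧
    (∀ α : ℂ, α ^ 2 = (Complex.I + 1) * α + Complex.I →
      R = {α, -α, Complex.I * α, -(Complex.I * α),
        α⁻¹, -α⁻¹, Complex.I * α⁻¹, -(Complex.I * α⁻¹)}) ∧
    (fun x => Complex.I * x) '' R = R ∧ (fun x => x⁻¹) '' R = R := by
  intro R
  refine ⟨?_, fun α hα => setOf_octic_eq_zero hα, ?_, ?_⟩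
  · have hR : R = {x | octic.IsRoot x} := Set.ext fun _ => octic_isRoot_iff.symm
    rw [hR, ncard_setOf_isRoot_of_separable separable_octic, natDegree_octic]
  · exact (mul_left_surjective₀ I_ne_zero).image_eq_of_preimage_eq
      (Set.ext octic_eval_I_mul_eq_zero_iff)
  · exact inv_involutive.surjective.image_eq_of_preimage_eq
      (Set.ext octic_eval_inv_eq_zero_iff)
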